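/- arXiv:1205.2155 — 2 statements merged into one kernel-verified Lean document; each statement's English description precedes it below -/
import Mathlib

section
/- For every positive integer N, ospt(N) ≡ spt(N) (mod 2). -/
/-- The crank of a partition: largest part if there are no ones, otherwise
the number of parts larger than the number of ones, minus the number of ones. -/
def crank {N : ℕ} (p : N.Partition) : ℤ :=
  if p.parts.count 1 = 0 then (p.parts.sup : ℤ)
  else ((p.parts.filter (fun x => p.parts.count 1 < x)).card : ℤ) - (p.parts.count 1 : ℤ)

/-- `crankCount m N` = number of partitions of `N` with crank `m`, with the standard
convention at `N = 1`. -/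
def crankCount (m : ℤ) (N : ℕ) : ℤ :=
  if N = 1 then (if m = 0 then 1 else 0)
  else (Fintype.card {p : N.Partition // crank p = m} : ℤ)

/-- The `r`-th crank moment `M_r(N) = Σ_{m ∈ ℤ} m^r M(m,N)`. -/
noncomputable def crankMoment (r : ℕ) (N : ℕ) : ℤ :=
  ∑' m : ℤ, m ^ r * crankCount m N

/-- The `r`-th positive crank moment `M_r^+(N) = Σ_{m ≥ 1} m^r M(m,N)`. -/
noncomputable def posCrankMoment (r : ℕ) (N : ℕ) : ℤ :=
  ∑' n : ℕ, ((n : ℤ) + 1) ^ r * crankCount ((n : ℤ) + 1) N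

/-- The rank of a partition: largest part minus number of parts. -/
def rankPartition {N : ℕ} (p : N.Partition) : ℤ :=
  (p.parts.sup : ℤ) - (Multiset.card p.parts : ℤ)

/-- `rankCount m N` = number of partitions of `N` with rank `m`. -/
def rankCount (m : ℤ) (N : ℕ) : ℤ :=
  (Fintype.card {p : N.Partition // rankPartition p = m} : ℤ)

/-- The `r`-th positive rank moment `N_r^+(N) = Σ_{m ≥ 1} m^r N(m,N)`. -/
noncomputable def posRankMoment (r : ℕ) (N : ℕ) : ℤ :=
  ∑' n : ℕ, ((n : ℤ) + 1) ^ r * rankCount ((n : ℤ) + 1) N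

/-- `spt(N) = M_2^+(N) - N_2^+(N)`. -/
noncomputable def spt (N : ℕ) : ℤ := posCrankMoment 2 N - posRankMoment 2 N

/-- `ospt(N) = M_1^+(N) - N_1^+(N)`. -/
noncomputable def ospt (N : ℕ) : ℤ := posCrankMoment 1 N - posRankMoment 1 N

lemma crank_le' {N : ℕ} (p : N.Partition) : crank p ≤ (N : ℤ) := by
  have hsum := p.parts_sum
  have hsup : p.parts.sup ≤ N := by
    refine Multiset.sup_le.mpr fun x hx => ?_
    calc x ≤ p.parts.sum := Multiset.single_le_sum (fun y _ => Nat.zero_le y) x hx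
    _ = N := hsum
  have hcard : Multiset.card p.parts ≤ N := by
    have := Multiset.card_nsmul_le_sum (s := p.parts) (a := 1) (fun x hx => p.parts_pos hx)
    simpa [hsum] using this
  unfold crank
  split
  · exact_mod_cast hsup
  · have h1 : (p.parts.filter (fun x => p.parts.count 1 < x)).card ≤ Multiset.card p.parts :=
      Multiset.card_le_card (Multiset.filter_le _ _)
    have : ((p.parts.filter (fun x => p.parts.count 1 < x)).card : ℤ) ≤ (N : ℤ) := by
      exact_mod_cast h1.trans hcard
    omega

lemma rankPartition_le' {N : ℕ} (p : N.Partition) : rankPartition p ≤ (N : ℤ) := by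
  have hsum := p.parts_sum
  have hsup : p.parts.sup ≤ N := by
    refine Multiset.sup_le.mpr fun x hx => ?_
    calc x ≤ p.parts.sum := Multiset.single_le_sum (fun y _ => Nat.zero_le y) x hx
    _ = N := hsum
  unfold rankPartition
  have : (p.parts.sup : ℤ) ≤ (N : ℤ) := by exact_mod_cast hsup
  omega

lemma crankCount_eq_zero' {m : ℤ} {N : ℕ} (h : (N : ℤ) < m) : crankCount m N = 0 := by
  unfold crankCount
  split
  · rename_i h1
    subst h1
    have : m ≠ 0 := by omega
    simp [this]
  · norm_num
    rw [Fintype.card_eq_zero_iff]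
    constructor
    rintro ⟨p, hp⟩
    exact absurd (hp ▸ crank_le' p) (not_le.mpr h)

lemma rankCount_eq_zero' {m : ℤ} {N : ℕ} (h : (N : ℤ) < m) : rankCount m N = 0 := by
  unfold rankCount
  norm_num
  rw [Fintype.card_eq_zero_iff]
  constructor
  rintro ⟨p, hp⟩
  exact absurd (hp ▸ rankPartition_le' p) (not_le.mpr h)

lemma posCrankMoment_eq_sum' (r N : ℕ) :
    posCrankMoment r N = ∑ n ∈ Finset.range N, ((n : ℤ) + 1) ^ r * crankCount ((n : ℤ) + 1) N := by
  unfold posCrankMoment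
  apply tsum_eq_sum
  intro n hn
  rw [crankCount_eq_zero' (by simp at hn; omega)]
  ring

lemma posRankMoment_eq_sum' (r N : ℕ) :
    posRankMoment r N = ∑ n ∈ Finset.range N, ((n : ℤ) + 1) ^ r * rankCount ((n : ℤ) + 1) N := by
  unfold posRankMoment
  apply tsum_eq_sum
  intro n hn
  rw [rankCount_eq_zero' (by simp at hn; omega)]
  ring

/-- `ospt(N) ≡ spt(N) (mod 2)`. -/
theorem ospt_modEq_spt (N : ℕ) (hN : 0 < N) : ospt N ≡ spt N [ZMOD 2] := by
  rw [Int.modEq_iff_dvd]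
  unfold ospt spt
  rw [posCrankMoment_eq_sum', posCrankMoment_eq_sum', posRankMoment_eq_sum',
    posRankMoment_eq_sum', ← Finset.sum_sub_distrib, ← Finset.sum_sub_distrib,
    ← Finset.sum_sub_distrib]
  apply Finset.dvd_sum
  intro n _
  have heq : ((n : ℤ) + 1) ^ 2 * crankCount ((n : ℤ) + 1) N -
        ((n : ℤ) + 1) ^ 2 * rankCount ((n : ℤ) + 1) N -
      (((n : ℤ) + 1) ^ 1 * crankCount ((n : ℤ) + 1) N -
        ((n : ℤ) + 1) ^ 1 * rankCount ((n : ℤ) + 1) N) =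
      ((n : ℤ) * ((n : ℤ) + 1)) * (crankCount ((n : ℤ) + 1) N - rankCount ((n : ℤ) + 1) N) := by
    ring
  rw [heq]
  exact dvd_mul_of_dvd_left (Int.even_mul_succ_self (n : ℤ)).two_dvd _
end

section
/- Let g(y) = Σ_{n≥1} (−1)^{n+1} e^{−n²y/2}(1 − e^{−n²y})/n for y > 0. Then lim_{y→0⁺} g(y)/y = 1/4. -/
/-!
Let `gaussAltSum t = ∑_{n ≥ 1} (-1)^{n+1} n e^{-t n²}` and
`gaussAltLogSum s = ∑_{n ≥ 1} (-1)^{n+1} e^{-s n²} / n`. Then `g(y) = gaussAltLogSum (y/2) -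
gaussAltLogSum (3y/2)` and `gaussAltLogSum' = -gaussAltSum`, so by the mean value theorem `g(y)/y`
is a value of `gaussAltSum` on `(y/2, 3y/2)`, and it suffices that `gaussAltSum t → 1/4`, the Abel
value of `1 - 2 + 3 - ⋯`.

Euler's transform `∑ (-1)^n a_n = (a_0 - ∑ (-1)^n Δa_n) / 2`, applied three times to
`a_n = (n+1) e^{-t(n+1)²}`, writes `8 gaussAltSum t` as `7e^{-t} - 8e^{-4t} + 3e^{-9t} → 2` minus an
alternating sum of third differences. These are bounded by the third derivative of `x e^{-t x²}`,
which is `O(t e^{-t x²/2})`, so by comparison with the Gaussian integral the remainder is `O(√t)`.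
-/

open Filter Topology Set fwdDiff Real

section AlternatingSeries

variable {a : ℕ → ℝ}

lemma Summable.fwdDiff (ha : Summable a) : Summable (Δ_[1] a) :=
  ((summable_nat_add_iff 1).2 ha).sub ha

lemma tsum_alternating_fwdDiff (ha : Summable a) :
    ∑' n, (-1 : ℝ) ^ n * Δ_[1] a n = a 0 - 2 * ∑' n, (-1 : ℝ) ^ n * a n := by
  have hshift : Summable fun n ↦ (-1 : ℝ) ^ n * a (n + 1) :=
    ((summable_nat_add_iff 1).2 ha).alternating
  have hsplit := ha.alternating.tsum_eq_zero_add
  simp only [pow_succ, mul_neg_one, neg_mul, tsum_neg, pow_zero, one_mul] at hsplit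
  simp only [fwdDiff, mul_sub]
  rw [hshift.tsum_sub ha.alternating]
  linarith

lemma eight_mul_tsum_alternating (ha : Summable a) :
    8 * ∑' n, (-1 : ℝ) ^ n * a n =
      4 * a 0 - 2 * Δ_[1] a 0 + Δ_[1] ^[2] a 0 - ∑' n, (-1 : ℝ) ^ n * Δ_[1] ^[3] a n := by
  have h1 := tsum_alternating_fwdDiff ha
  have h2 := tsum_alternating_fwdDiff ha.fwdDiff
  have h3 := tsum_alternating_fwdDiff ha.fwdDiff.fwdDiff
  simp only [Function.iterate_succ, Function.iterate_zero, Function.comp_apply, id]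
  linarith

end AlternatingSeries

lemma fwdDiff_iter_natCast_add_one (f : ℝ → ℝ) (k n : ℕ) :
    Δ_[1] ^[k] (fun m : ℕ ↦ f (m + 1)) n = Δ_[1] ^[k] f (n + 1) := by
  simp only [fwdDiff_iter_eq_sum_shift, nsmul_eq_mul, mul_one]
  push_cast
  simp only [add_right_comm]

theorem abs_fwdDiff_iter_le_of_abs_iteratedDeriv_le {f : ℝ → ℝ} {k : ℕ} (hf : ContDiff ℝ k f)
    {x C : ℝ} (hC : ∀ y ∈ Icc x (x + k), |iteratedDeriv k f y| ≤ C) : |Δ_[1] ^[k] f x| ≤ C := by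
  induction k generalizing f with
  | zero => simpa using hC x (by simp)
  | succ k ih =>
    rw [Function.iterate_succ_apply]
    refine ih ((hf.comp (contDiff_id.add contDiff_const)).sub hf |>.of_le (by norm_cast; omega))
      fun y hy ↦ ?_
    have hfk : ContDiff ℝ k f := hf.of_le (by norm_cast; omega)
    have hfk1 : ContDiff ℝ k fun z ↦ f (z + 1) := hfk.comp (contDiff_id.add contDiff_const)
    have hshift :
        iteratedDeriv k (Δ_[1] f) y = iteratedDeriv k f (y + 1) - iteratedDeriv k f y := by
      rw [show Δ_[1] f = (fun z ↦ f (z + 1)) - f from rfl,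
        iteratedDeriv_sub hfk1.contDiffAt hfk.contDiffAt, iteratedDeriv_comp_add_const]
    have hmvt := (convex_Icc y (y + 1)).norm_image_sub_le_of_norm_deriv_le
      (fun z _ ↦ (hf.differentiable_iteratedDeriv' k).differentiableAt)
      (fun z hz ↦ by
        rw [← iteratedDeriv_succ]
        push_cast at hC hy
        exact hC z ⟨hy.1.trans hz.1, by linarith [hz.2, hy.2]⟩)
      (left_mem_Icc.2 (by linarith)) (right_mem_Icc.2 (by linarith))
    simpa [hshift] using hmvt

theorem tendsto_slope_of_tendsto_deriv {f f' : ℝ → ℝ} {L a b : ℝ} (ha : 0 < a) (hab : a < b)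
    (hf : ∀ x > 0, HasDerivAt f (f' x) x) (hf' : Tendsto f' (𝓝[>] 0) (𝓝 L)) :
    Tendsto (fun y ↦ (f (b * y) - f (a * y)) / ((b - a) * y)) (𝓝[>] 0) (𝓝 L) := by
  rw [Metric.tendsto_nhdsWithin_nhds] at hf' ⊢
  intro ε hε
  obtain ⟨δ, hδ, hL⟩ := hf' ε hε
  refine ⟨δ / b, div_pos hδ (ha.trans hab), fun y hy hyδ ↦ ?_⟩
  have hy : 0 < y := hy
  have hby : b * y < δ := by
    rw [Real.dist_eq, sub_zero, abs_of_pos hy] at hyδ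
    rwa [lt_div_iff₀' (ha.trans hab)] at hyδ
  obtain ⟨c, hc, hslope⟩ := exists_hasDerivAt_eq_slope f f' (by nlinarith : a * y < b * y)
    (fun x hx ↦ (hf x (by nlinarith [hx.1])).continuousAt.continuousWithinAt)
    (fun x hx ↦ hf x (by nlinarith [hx.1]))
  have hc0 : 0 < c := by nlinarith [hc.1]
  rw [show (b - a) * y = b * y - a * y by ring, ← hslope]
  exact hL hc0 (by rw [Real.dist_eq, sub_zero, abs_of_pos hc0]; linarith [hc.2])

lemma summable_pow_mul_exp_neg_mul_sq (k : ℕ) {s : ℝ} (hs : 0 < s) :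
    Summable fun n : ℕ ↦ ((n : ℝ) + 1) ^ k * exp (-s * ((n : ℝ) + 1) ^ 2) := by
  have h := (Real.summable_pow_mul_exp_neg_nat_mul k hs).of_nonneg_of_le (fun _ ↦ by positivity)
    fun n : ℕ ↦ show (n : ℝ) ^ k * exp (-s * (n : ℝ) ^ 2) ≤ (n : ℝ) ^ k * exp (-s * n) by
      have hn : (n : ℝ) ≤ (n : ℝ) ^ 2 := by exact_mod_cast Nat.le_self_pow two_ne_zero n
      gcongr (n : ℝ) ^ k * exp ?_
      nlinarith
  exact_mod_cast (summable_nat_add_iff 1).2 h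

lemma tsum_exp_neg_mul_sq_le {s : ℝ} (hs : 0 < s) :
    ∑' n : ℕ, exp (-s * ((n : ℝ) + 1) ^ 2) ≤ √(π / s) / 2 := by
  have hanti : AntitoneOn (fun x : ℝ ↦ exp (-s * x ^ 2)) (Ici 0) := fun x hx y _ hxy ↦ by
    simp only [exp_le_exp]
    nlinarith [mul_le_mul hxy hxy (mem_Ici.1 hx) (hx.out.trans hxy)]
  have h := hanti.tsum_add_one_le_integral (integrable_exp_neg_mul_sq hs).integrableOn
    fun _ _ ↦ (exp_pos _).le
  rw [integral_gaussian_Ioi] at h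
  exact_mod_cast h

lemma hasDerivAt_mul_exp_neg_mul_sq {p : ℝ → ℝ} {p' t x : ℝ} (hp : HasDerivAt p p' x) :
    HasDerivAt (fun x ↦ p x * exp (-t * x ^ 2)) ((p' - 2 * t * x * p x) * exp (-t * x ^ 2)) x := by
  have hq : HasDerivAt (fun x ↦ -t * x ^ 2) (-t * (2 * x)) x := by
    simpa using (hasDerivAt_pow 2 x).const_mul (-t)
  exact (hp.mul hq.exp).congr_deriv (by ring)

lemma iteratedDeriv_three_mul_exp_neg_mul_sq (t : ℝ) :
    iteratedDeriv 3 (fun x ↦ x * exp (-t * x ^ 2)) =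
      fun x ↦ (-6 * t + 24 * t ^ 2 * x ^ 2 - 8 * t ^ 3 * x ^ 4) * exp (-t * x ^ 2) := by
  have d1 : deriv (fun x ↦ x * exp (-t * x ^ 2)) = fun x ↦ (1 - 2 * t * x ^ 2) * exp (-t * x ^ 2) :=
    funext fun x ↦ ((hasDerivAt_mul_exp_neg_mul_sq (hasDerivAt_id' x)).congr_deriv (by ring)).deriv
  have d2 : deriv (fun x ↦ (1 - 2 * t * x ^ 2) * exp (-t * x ^ 2)) =
      fun x ↦ (-6 * t * x + 4 * t ^ 2 * x ^ 3) * exp (-t * x ^ 2) :=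
    funext fun x ↦ ((hasDerivAt_mul_exp_neg_mul_sq
      (((hasDerivAt_pow 2 x).const_mul (2 * t)).const_sub 1)).congr_deriv (by ring)).deriv
  have d3 : deriv (fun x ↦ (-6 * t * x + 4 * t ^ 2 * x ^ 3) * exp (-t * x ^ 2)) =
      fun x ↦ (-6 * t + 24 * t ^ 2 * x ^ 2 - 8 * t ^ 3 * x ^ 4) * exp (-t * x ^ 2) :=
    funext fun x ↦ ((hasDerivAt_mul_exp_neg_mul_sq (((hasDerivAt_id' x).const_mul (-6 * t)).add
      ((hasDerivAt_pow 3 x).const_mul (4 * t ^ 2)))).congr_deriv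
        (by simp only [Pi.add_apply]; ring)).deriv
  rw [iteratedDeriv_succ, iteratedDeriv_succ, iteratedDeriv_one, d1, d2, d3]

lemma abs_iteratedDeriv_three_mul_exp_neg_mul_sq_le {t : ℝ} (ht : 0 ≤ t) (x : ℝ) :
    |iteratedDeriv 3 (fun x ↦ x * exp (-t * x ^ 2)) x| ≤ 64 * t * exp (-(t / 2) * x ^ 2) := by
  rw [iteratedDeriv_three_mul_exp_neg_mul_sq]
  set v := t * x ^ 2 with hv
  have hv0 : 0 ≤ v := by positivity
  have hpoly : |-6 * t + 24 * t ^ 2 * x ^ 2 - 8 * t ^ 3 * x ^ 4| ≤ 64 * t * exp (v / 2) := by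
    -- `1 + v/2 + v²/8 ≤ exp (v/2)` dominates `6 + 24 v + 8 v²` up to the factor 64
    have hexp := quadratic_le_exp_of_nonneg (by positivity : 0 ≤ v / 2)
    rw [show -6 * t + 24 * t ^ 2 * x ^ 2 - 8 * t ^ 3 * x ^ 4 = t * (-6 + 24 * v - 8 * v ^ 2) by
      rw [hv]; ring, abs_mul, abs_of_nonneg ht]
    have hQ : |-6 + 24 * v - 8 * v ^ 2| ≤ 64 * exp (v / 2) := by
      rw [abs_le]; constructor <;> nlinarith
    linarith [mul_le_mul_of_nonneg_left hQ ht]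
  have hsplit : exp (-t * x ^ 2) = exp (-(v / 2)) * exp (-(t / 2) * x ^ 2) := by
    rw [← exp_add]; congr 1; rw [hv]; ring
  rw [abs_mul, abs_of_pos (exp_pos _), hsplit, ← mul_assoc]
  gcongr ?_ * _
  calc |-6 * t + 24 * t ^ 2 * x ^ 2 - 8 * t ^ 3 * x ^ 4| * exp (-(v / 2))
      ≤ 64 * t * exp (v / 2) * exp (-(v / 2)) := by gcongr
    _ = 64 * t := by rw [mul_assoc, ← exp_add]; simp

lemma abs_fwdDiff_iter_three_mul_exp_neg_mul_sq_le {t x : ℝ} (ht : 0 ≤ t) (hx : 0 ≤ x) :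
    |Δ_[1] ^[3] (fun x ↦ x * exp (-t * x ^ 2)) x| ≤ 64 * t * exp (-(t / 2) * x ^ 2) :=
  abs_fwdDiff_iter_le_of_abs_iteratedDeriv_le (by fun_prop) fun y hy ↦
    (abs_iteratedDeriv_three_mul_exp_neg_mul_sq_le ht y).trans <| by
      have hxy : x ^ 2 ≤ y ^ 2 := pow_le_pow_left₀ hx hy.1 2
      gcongr 64 * t * exp ?_
      nlinarith

lemma abs_tsum_alternating_fwdDiff_iter_three_le {t : ℝ} (ht : 0 < t) :
    |∑' n, (-1 : ℝ) ^ n * Δ_[1] ^[3] (fun m : ℕ ↦ ((m : ℝ) + 1) * exp (-t * ((m : ℝ) + 1) ^ 2)) n|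
      ≤ 32 * √(2 * π * t) := by
  have hmaj := (summable_pow_mul_exp_neg_mul_sq 0 (half_pos ht)).mul_left (64 * t)
  simp only [pow_zero, one_mul] at hmaj
  rw [← Real.norm_eq_abs]
  calc _ ≤ ∑' n : ℕ, 64 * t * exp (-(t / 2) * ((n : ℝ) + 1) ^ 2) :=
        tsum_of_norm_bounded hmaj.hasSum fun n ↦ by
          rw [norm_mul, norm_pow, norm_neg, norm_one, one_pow, one_mul, Real.norm_eq_abs]
          have := fwdDiff_iter_natCast_add_one (fun x ↦ x * exp (-t * x ^ 2)) 3 n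
          beta_reduce at this
          rw [this]
          exact abs_fwdDiff_iter_three_mul_exp_neg_mul_sq_le ht.le (by positivity)
    _ = 64 * t * ∑' n : ℕ, exp (-(t / 2) * ((n : ℝ) + 1) ^ 2) := tsum_mul_left
    _ ≤ 64 * t * (√(π / (t / 2)) / 2) := by gcongr; exact tsum_exp_neg_mul_sq_le (half_pos ht)
    _ = 32 * √(2 * π * t) := by
        rw [show π / (t / 2) = 2 * π * t / t ^ 2 by field_simp, sqrt_div' _ (sq_nonneg t),
          sqrt_sq ht.le]
        field_simp
        ring

noncomputable def gaussAltSum (t : ℝ) : ℝ :=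
  ∑' n : ℕ, (-1 : ℝ) ^ n * (((n : ℝ) + 1) * exp (-t * ((n : ℝ) + 1) ^ 2))

lemma eight_mul_gaussAltSum {t : ℝ} (ht : 0 < t) :
    8 * gaussAltSum t = 7 * exp (-t) - 8 * exp (-4 * t) + 3 * exp (-9 * t) -
      ∑' n, (-1 : ℝ) ^ n *
        Δ_[1] ^[3] (fun m : ℕ ↦ ((m : ℝ) + 1) * exp (-t * ((m : ℝ) + 1) ^ 2)) n := by
  rw [gaussAltSum, eight_mul_tsum_alternating (by simpa using summable_pow_mul_exp_neg_mul_sq 1 ht)]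
  simp only [Function.iterate_succ, Function.iterate_zero, Function.comp_apply, id, fwdDiff]
  norm_num
  ring_nf

theorem tendsto_gaussAltSum : Tendsto gaussAltSum (𝓝[>] 0) (𝓝 (1 / 4)) := by
  have hexp : Tendsto (fun t ↦ 7 * exp (-t) - 8 * exp (-4 * t) + 3 * exp (-9 * t))
      (𝓝[>] 0) (𝓝 2) := by
    convert ((by fun_prop : Continuous fun t : ℝ ↦
      7 * exp (-t) - 8 * exp (-4 * t) + 3 * exp (-9 * t)).tendsto 0).mono_left
      nhdsWithin_le_nhds using 2
    norm_num
  have hbound : Tendsto (fun t : ℝ ↦ 32 * √(2 * π * t)) (𝓝[>] 0) (𝓝 0) := by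
    convert ((by fun_prop : Continuous fun t : ℝ ↦ 32 * √(2 * π * t)).tendsto 0).mono_left
      nhdsWithin_le_nhds using 2
    simp
  set R : ℝ → ℝ := fun t ↦ ∑' n, (-1 : ℝ) ^ n *
    Δ_[1] ^[3] (fun m : ℕ ↦ ((m : ℝ) + 1) * exp (-t * ((m : ℝ) + 1) ^ 2)) n
  have hrem : Tendsto R (𝓝[>] 0) (𝓝 0) := squeeze_zero_norm'
    (eventually_nhdsWithin_of_forall fun t ht ↦ abs_tsum_alternating_fwdDiff_iter_three_le ht)
    hbound
  refine ((hexp.sub hrem).div_const 8).congr' ?_ |>.trans_eq ?_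
  · filter_upwards [self_mem_nhdsWithin] with t ht
    rw [← eight_mul_gaussAltSum ht]
    ring
  · norm_num

noncomputable def gaussAltLogSum (s : ℝ) : ℝ :=
  ∑' n : ℕ, (-1 : ℝ) ^ n / ((n : ℝ) + 1) * exp (-s * ((n : ℝ) + 1) ^ 2)

lemma summable_gaussAltLogSum {s : ℝ} (hs : 0 < s) :
    Summable fun n : ℕ ↦ (-1 : ℝ) ^ n / ((n : ℝ) + 1) * exp (-s * ((n : ℝ) + 1) ^ 2) := by
  refine (summable_pow_mul_exp_neg_mul_sq 0 hs).of_norm_bounded fun n ↦ ?_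
  rw [norm_mul, norm_div, norm_pow, norm_neg, norm_one, one_pow, pow_zero, one_mul,
    Real.norm_of_nonneg (exp_pos _).le, Real.norm_of_nonneg (by positivity)]
  exact mul_le_of_le_one_left (exp_pos _).le
    (div_le_one_of_le₀ (by linarith [n.cast_nonneg (α := ℝ)]) (by positivity))

lemma hasDerivAt_gaussAltLogSum {s : ℝ} (hs : 0 < s) :
    HasDerivAt gaussAltLogSum (-gaussAltSum s) s := by
  have hderiv : ∀ (n : ℕ) (y : ℝ), HasDerivAt
      (fun y ↦ (-1 : ℝ) ^ n / ((n : ℝ) + 1) * exp (-y * ((n : ℝ) + 1) ^ 2))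
      (-((-1 : ℝ) ^ n * (((n : ℝ) + 1) * exp (-y * ((n : ℝ) + 1) ^ 2)))) y := fun n y ↦ by
    have hN : (n : ℝ) + 1 ≠ 0 := by positivity
    refine ((((hasDerivAt_neg y).mul_const (((n : ℝ) + 1) ^ 2)).exp).const_mul _).congr_deriv ?_
    field_simp
  have hbound : ∀ (n : ℕ), ∀ y ∈ Ioi (s / 2),
      ‖-((-1 : ℝ) ^ n * (((n : ℝ) + 1) * exp (-y * ((n : ℝ) + 1) ^ 2)))‖ ≤
        ((n : ℝ) + 1) ^ 1 * exp (-(s / 2) * ((n : ℝ) + 1) ^ 2) := fun n y hy ↦ by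
    rw [norm_neg, norm_mul, norm_pow, norm_neg, norm_one, one_pow, one_mul, pow_one,
      Real.norm_of_nonneg (by positivity)]
    gcongr
    exact mem_Ioi.1 hy |>.le
  have h := hasDerivAt_tsum_of_isPreconnected (summable_pow_mul_exp_neg_mul_sq 1 (half_pos hs))
    isOpen_Ioi isPreconnected_Ioi (fun n y _ ↦ hderiv n y) hbound (half_lt_self hs)
    (summable_gaussAltLogSum hs) (half_lt_self hs)
  rwa [tsum_neg] at h

lemma tsum_eq_gaussAltLogSum_sub {y : ℝ} (hy : 0 < y) :
    ∑' n : ℕ, (-1 : ℝ) ^ n * exp (-((n : ℝ) + 1) ^ 2 * y / 2) *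
        (1 - exp (-((n : ℝ) + 1) ^ 2 * y)) / ((n : ℝ) + 1) =
      gaussAltLogSum (y / 2) - gaussAltLogSum (3 / 2 * y) := by
  rw [gaussAltLogSum, gaussAltLogSum, ← (summable_gaussAltLogSum (half_pos hy)).tsum_sub
    (summable_gaussAltLogSum (by positivity))]
  congr 1 with n
  rw [mul_sub, mul_one, mul_assoc, ← exp_add]
  ring_nf

/-- For `g(y) = Σ_{n≥1} (−1)^{n+1} e^{−n²y/2}(1 − e^{−n²y})/n`, one has
`lim_{y→0⁺} g(y)/y = 1/4`. -/
theorem g_div_y_tendsto :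
    Filter.Tendsto
      (fun y : ℝ =>
        (∑' n : ℕ, (-1 : ℝ) ^ n * Real.exp (-((n : ℝ) + 1) ^ 2 * y / 2) *
          (1 - Real.exp (-((n : ℝ) + 1) ^ 2 * y)) / ((n : ℝ) + 1)) / y)
      (nhdsWithin 0 (Set.Ioi 0)) (nhds (1 / 4)) := by
  have h := tendsto_slope_of_tendsto_deriv (f := -gaussAltLogSum) (a := 1 / 2) (b := 3 / 2)
    (by norm_num) (by norm_num) (fun s hs ↦ by simpa using (hasDerivAt_gaussAltLogSum hs).neg)
    tendsto_gaussAltSum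
  refine h.congr' ?_
  filter_upwards [self_mem_nhdsWithin] with y hy
  rw [tsum_eq_gaussAltLogSum_sub hy, Pi.neg_apply, Pi.neg_apply]
  ring_nf
end
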